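/- Kolmogorov–Landau inequality on the torus: for any twice continuously differentiable 2π-periodic function h, ‖∂_x h‖_{L^∞}² ≤ 2 ‖h‖_{L^∞} ‖∂_x² h‖_{L^∞}. -/

import Mathlib

/-!
Taylor's formula at `x ± t` gives `2 t h'(x) ≤ 2 ‖h‖ + ‖h''‖ t²` for every real `t`. A quadratic
polynomial in `t` that is nonnegative everywhere has nonpositive discriminant, which here reads
`h'(x)² ≤ 2 ‖h‖ ‖h''‖`.
-/

open Set Function

theorem Function.Periodic.deriv {𝕜 F : Type*} [NontriviallyNormedField 𝕜] [NormedAddCommGroup F]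
    [NormedSpace 𝕜 F] {f : 𝕜 → F} {c : 𝕜} (hf : Periodic f c) : Periodic (deriv f) c := fun x => by
  rw [← deriv_comp_add_const, hf.funext]

theorem Function.Periodic.iteratedDeriv {𝕜 F : Type*} [NontriviallyNormedField 𝕜]
    [NormedAddCommGroup F] [NormedSpace 𝕜 F] {f : 𝕜 → F} {c : 𝕜} (hf : Periodic f c) (n : ℕ) :
    Periodic (iteratedDeriv n f) c := by
  induction n with
  | zero => simpa using hf
  | succ n ih => simpa only [iteratedDeriv_succ] using ih.deriv

theorem Function.Periodic.bddAbove_range_abs {f : ℝ → ℝ} {c : ℝ} (hf : Periodic f c) (hc : c ≠ 0)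
    (hcont : Continuous f) : BddAbove (range fun x => |f x|) :=
  ((hf.comp abs).compact_of_continuous hc hcont.abs).bddAbove

theorem abs_sub_sub_mul_deriv_le {f : ℝ → ℝ} (hf : ContDiff ℝ 2 f) {C : ℝ}
    (hC : ∀ y, |iteratedDeriv 2 f y| ≤ C) (x t : ℝ) :
    |f (x + t) - f x - t * deriv f x| ≤ C * t ^ 2 / 2 := by
  rcases eq_or_ne t 0 with rfl | ht
  · simp
  have hx : x ≠ x + t := by simpa using ht
  obtain ⟨y, -, hy⟩ := taylor_mean_remainder_lagrange_iteratedDeriv (n := 1) hx hf.contDiffOn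
  have htaylor : taylorWithinEval f 1 (uIcc x (x + t)) x (x + t) = f x + t * deriv f x := by
    rw [← zero_add 1, taylorWithinEval_succ, taylor_within_zero_eval,
      iteratedDerivWithin_one, (hf.differentiable two_ne_zero x).derivWithin
        (uniqueDiffOn_uIcc hx x left_mem_uIcc)]
    simp
  rw [sub_sub, ← htaylor, hy, add_sub_cancel_left, abs_div, abs_mul, abs_pow]
  norm_num
  gcongr
  exact hC y

theorem sq_deriv_le_two_mul {f : ℝ → ℝ} (hf : ContDiff ℝ 2 f) {A C : ℝ} (hA : ∀ y, |f y| ≤ A)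
    (hC : ∀ y, |iteratedDeriv 2 f y| ≤ C) (x : ℝ) : deriv f x ^ 2 ≤ 2 * A * C := by
  have hquad : ∀ t, 0 ≤ C * (t * t) + (-2 * deriv f x) * t + 2 * A := fun t => by
    have hplus := abs_le.mp (abs_sub_sub_mul_deriv_le hf hC x t)
    have hminus := abs_le.mp (abs_sub_sub_mul_deriv_le hf hC x (-t))
    have hAplus := abs_le.mp (hA (x + t))
    have hAminus := abs_le.mp (hA (x + -t))
    nlinarith
  have hdiscrim := discrim_le_zero hquad
  rw [discrim] at hdiscrim
  linarith

theorem sq_iSup_abs_le {ι : Type*} [Nonempty ι] {g : ι → ℝ} {B : ℝ} (hg : ∀ i, g i ^ 2 ≤ B) :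
    (⨆ i, |g i|) ^ 2 ≤ B := by
  have hB : 0 ≤ B := (sq_nonneg _).trans (hg (Classical.arbitrary ι))
  calc (⨆ i, |g i|) ^ 2 ≤ √B ^ 2 :=
        pow_le_pow_left₀ (Real.iSup_nonneg fun i => abs_nonneg _)
          (Real.iSup_le (fun i => Real.abs_le_sqrt (hg i)) (Real.sqrt_nonneg B)) 2
    _ = B := Real.sq_sqrt hB

/-- Kolmogorov–Landau inequality on the torus:
`‖∂ₓh‖_{L^∞}² ≤ 2 ‖h‖_{L^∞} ‖∂ₓ²h‖_{L^∞}` for `C²` `2π`-periodic functions. -/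
theorem kolmogorov_landau (h : ℝ → ℝ) (hs : ContDiff ℝ 2 h)
    (hp : Function.Periodic h (2 * Real.pi)) :
    (⨆ x : ℝ, |deriv h x|) ^ 2 ≤
      2 * (⨆ x : ℝ, |h x|) * (⨆ x : ℝ, |iteratedDeriv 2 h x|) := by
  have h2π : 2 * Real.pi ≠ 0 := Real.two_pi_pos.ne'
  have hbdd₀ := hp.bddAbove_range_abs h2π hs.continuous
  have hbdd₂ := (hp.iteratedDeriv 2).bddAbove_range_abs h2π (hs.continuous_iteratedDeriv 2 le_rfl)
  exact sq_iSup_abs_le <|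
    sq_deriv_le_two_mul hs (fun y => le_ciSup hbdd₀ y) (fun y => le_ciSup hbdd₂ y)
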